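/- Let Ω be a measurable space, μ a probability measure on Ω, and κ a Markov kernel from Ω to ℝ such that for μ-almost every ω the measure κ(ω) has no atoms. Define the two-sided prior-predictive replication p-value as the map p₂(ω, t) = 2 · min{κ(ω)((-∞, t]), κ(ω)([t, ∞))} on Ω × ℝ. Then the pushforward of the composition measure μ ⊗ κ under p₂ is the uniform (Lebesgue) probability measure on the interval [0, 1]. (Two-sided version of Proposition 1.) -/

import Mathlib

/-!
Write `F` for the cdf of `κ ω`; without atoms it is continuous and `κ ω [t, ∞) = 1 - F t`, so
the p-value is `tentMap ∘ F` with `tentMap u = 2 min(u, 1 - u)`. By the probability integral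
transform `F` pushes `κ ω` forward to the uniform law on `[0, 1]`, and the tent map preserves
that law. Hence the p-value is uniform under `κ ω` for `μ`-almost every `ω`, and integrating
over `μ` gives the same law under `μ ⊗ₘ κ`.
-/

open MeasureTheory ProbabilityTheory Set

lemma ProbabilityTheory.Kernel.measurable_apply_prodMk_preimage {α β γ : Type*}
    [MeasurableSpace α] [MeasurableSpace β] [MeasurableSpace γ]
    (κ : Kernel α β) [IsSFiniteKernel κ] {s : Set (γ × β)} (hs : MeasurableSet s) :
    Measurable fun p : α × γ => κ p.1 (Prod.mk p.2 ⁻¹' s) :=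
  Kernel.measurable_kernel_prodMk_left (κ := κ.comap Prod.fst measurable_fst)
    (t := {q : (α × γ) × β | (q.1.2, q.2) ∈ s})
    (hs.preimage (measurable_fst.snd.prodMk measurable_snd))

lemma MeasureTheory.Measure.map_compProd_eq_of_ae_map_eq {α β γ : Type*}
    [MeasurableSpace α] [MeasurableSpace β] [MeasurableSpace γ]
    {μ : Measure α} [IsProbabilityMeasure μ] {κ : Kernel α β} [IsSFiniteKernel κ]
    {f : α × β → γ} (hf : Measurable f) {ν : Measure γ}
    (h : ∀ᵐ a ∂μ, (κ a).map (fun b => f (a, b)) = ν) :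
    (μ ⊗ₘ κ).map f = ν := by
  ext s hs
  rw [Measure.map_apply hf hs, Measure.compProd_apply (hf hs)]
  calc ∫⁻ a, κ a (Prod.mk a ⁻¹' (f ⁻¹' s)) ∂μ = ∫⁻ _, ν s ∂μ := by
        refine lintegral_congr_ae (h.mono fun a ha => ?_)
        have hfa : Measurable fun b => f (a, b) := hf.comp measurable_prodMk_left
        rw [← ha, Measure.map_apply hfa hs]
        rfl
    _ = ν s := by simp

lemma MeasureTheory.Measure.eq_volume_restrict_Icc_of_measure_Iic {ρ : Measure ℝ}
    [IsProbabilityMeasure ρ] (hρ : ρ (Icc 0 1) = 1)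
    (hIic : ∀ x, 0 ≤ x → x < 1 → ρ (Iic x) = ENNReal.ofReal x) :
    ρ = volume.restrict (Icc 0 1) := by
  refine Measure.ext_of_Iic _ _ fun x => ?_
  rw [Measure.restrict_apply measurableSet_Iic]
  rcases lt_or_ge x 0 with hneg | hx0
  · have hdisj : Iic x ⊆ (Icc 0 1)ᶜ := fun t ht ht' => by linarith [ht'.1, mem_Iic.1 ht]
    have hempty : Iic x ∩ Icc 0 1 = ∅ := Set.ext fun t => by grind
    rw [measure_mono_null hdisj ((prob_compl_eq_zero_iff measurableSet_Icc).2 hρ),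
      hempty, measure_empty]
  rcases lt_or_ge x 1 with hx1 | hx1
  · have hinter : Iic x ∩ Icc 0 1 = Icc 0 x := Set.ext fun t => by grind
    rw [hIic x hx0 hx1, hinter, Real.volume_Icc, sub_zero]
  · have hsub : Icc (0 : ℝ) 1 ⊆ Iic x := fun t ht => ht.2.trans hx1
    rw [inter_eq_right.2 hsub, Real.volume_Icc, sub_zero, ENNReal.ofReal_one]
    exact le_antisymm prob_le_one (hρ ▸ measure_mono hsub)

def tentMap (u : ℝ) : ℝ := 2 * min u (1 - u)

lemma measurable_tentMap : Measurable tentMap := by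
  unfold tentMap; fun_prop

lemma mapsTo_tentMap_Icc : MapsTo tentMap (Icc 0 1) (Icc 0 1) := fun u hu => by
  unfold tentMap; constructor <;> grind

lemma setOf_tentMap_le_inter_Icc {x : ℝ} (hx1 : x ≤ 1) :
    {u | tentMap u ≤ x} ∩ Icc 0 1 = Icc 0 (x / 2) ∪ Icc (1 - x / 2) 1 := by
  ext u; simp only [tentMap, mem_inter_iff, mem_ofPred_eq, mem_union, mem_Icc]; grind

theorem map_tentMap_volume_restrict_Icc :
    (volume.restrict (Icc 0 1)).map tentMap = volume.restrict (Icc 0 1) := by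
  have : IsProbabilityMeasure (volume.restrict (Icc (0 : ℝ) 1)) := ⟨by simp⟩
  have : IsProbabilityMeasure ((volume.restrict (Icc (0 : ℝ) 1)).map tentMap) :=
    Measure.isProbabilityMeasure_map measurable_tentMap.aemeasurable
  refine Measure.eq_volume_restrict_Icc_of_measure_Iic ?_ fun x hx0 hx1 => ?_
  · rw [Measure.map_apply measurable_tentMap measurableSet_Icc,
      Measure.restrict_apply (measurableSet_Icc.preimage measurable_tentMap),
      inter_eq_right.2 mapsTo_tentMap_Icc.subset_preimage]
    simp
  · rw [Measure.map_apply measurable_tentMap measurableSet_Iic,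
      Measure.restrict_apply (measurableSet_Iic.preimage measurable_tentMap)]
    change volume ({u | tentMap u ≤ x} ∩ Icc 0 1) = _
    have hdisj : Disjoint (Icc 0 (x / 2)) (Icc (1 - x / 2) 1) :=
      Set.disjoint_left.2 fun u h1 h2 => by linarith [h1.2, h2.1]
    rw [setOf_tentMap_le_inter_Icc hx1.le, measure_union hdisj measurableSet_Icc,
      Real.volume_Icc, Real.volume_Icc, ← ENNReal.ofReal_add (by linarith) (by linarith)]
    ring_nf

lemma exists_eq_and_setOf_le_eq_Iic {F : ℝ → ℝ} (hmono : Monotone F) (hcont : Continuous F)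
    {x : ℝ} (hbot : ∃ t, F t ≤ x) (htop : ∃ t, x < F t) :
    ∃ c, F c = x ∧ {t | F t ≤ x} = Iic c := by
  obtain ⟨a, ha⟩ := hbot
  obtain ⟨b, hb⟩ := htop
  set S := {t | F t ≤ x}
  have hbdd : BddAbove S :=
    ⟨b, fun t ht => by_contra fun h => (hb.trans_le (hmono (not_le.1 h).le)).not_ge ht⟩
  have hc : sSup S ∈ S := (isClosed_le hcont continuous_const).csSup_mem ⟨a, ha⟩ hbdd
  have hS : S = Iic (sSup S) :=
    Set.ext fun t => ⟨fun ht => le_csSup hbdd ht, fun ht => (hmono ht).trans hc⟩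
  obtain ⟨d, hd⟩ : ∃ d, F d = x := intermediate_value_univ a b hcont ⟨ha, hb.le⟩
  exact ⟨sSup S, le_antisymm hc (hd ▸ hmono (le_csSup hbdd hd.le)), hS⟩

namespace ProbabilityTheory

variable (ν : Measure ℝ) [IsProbabilityMeasure ν] [NullSingletonClass ν]

lemma continuous_cdf : Continuous (cdf ν) := by
  refine continuous_iff_continuousAt.2 fun x => ?_
  have hleft : Function.leftLim (cdf ν) x = cdf ν x := by
    have h := (cdf ν).measure_singleton x
    rw [measure_cdf, MeasureTheory.measure_singleton, eq_comm, ENNReal.ofReal_eq_zero,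
      sub_nonpos] at h
    exact le_antisymm ((monotone_cdf ν).leftLim_le le_rfl) h
  exact continuousAt_iff_continuous_left'_right'.2
    ⟨(monotone_cdf ν).continuousWithinAt_Iio_iff_leftLim_eq.2 hleft,
      ((cdf ν).right_continuous x).mono Ioi_subset_Ici_self⟩

lemma measureReal_Ici_eq_one_sub_cdf (t : ℝ) : ν.real (Ici t) = 1 - cdf ν t := by
  rw [cdf_eq_real, ← measureReal_congr (Iio_ae_eq_Iic (μ := ν)),
    ← probReal_compl_eq_one_sub measurableSet_Iio, compl_Iio]

lemma measure_setOf_cdf_le {x : ℝ} (hx0 : 0 ≤ x) (hx1 : x < 1) :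
    ν {t | cdf ν t ≤ x} = ENNReal.ofReal x := by
  by_cases hbot : ∃ t, cdf ν t ≤ x
  · obtain ⟨c, hc, hS⟩ := exists_eq_and_setOf_le_eq_Iic (monotone_cdf ν) (continuous_cdf ν)
      hbot ((tendsto_cdf_atTop ν).eventually_const_lt hx1).exists
    rw [hS, ← ofReal_cdf, hc]
  · simp only [not_exists, not_le] at hbot
    have hx : x = 0 := by
      refine le_antisymm (le_of_not_gt fun hx => ?_) hx0
      obtain ⟨t, ht⟩ := ((tendsto_cdf_atBot ν).eventually_lt_const hx).exists
      exact (hbot t).not_gt ht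
    have hS : {t | cdf ν t ≤ x} = ∅ := eq_empty_of_forall_notMem fun t ht => (hbot t).not_ge ht
    rw [hS, measure_empty, hx, ENNReal.ofReal_zero]

theorem map_cdf_eq_volume_restrict_Icc : ν.map (cdf ν) = volume.restrict (Icc 0 1) := by
  have hF : Measurable (cdf ν) := (continuous_cdf ν).measurable
  have : IsProbabilityMeasure (ν.map (cdf ν)) := Measure.isProbabilityMeasure_map hF.aemeasurable
  refine Measure.eq_volume_restrict_Icc_of_measure_Iic ?_ fun x hx0 hx1 => ?_
  · rw [Measure.map_apply hF measurableSet_Icc, preimage_eq_univ_iff.2 ?_, measure_univ]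
    rintro _ ⟨t, rfl⟩
    exact ⟨cdf_nonneg ν t, cdf_le_one ν t⟩
  · rw [Measure.map_apply hF measurableSet_Iic]
    exact measure_setOf_cdf_le ν hx0 hx1

theorem map_twoSided_pValue_eq_volume_restrict_Icc :
    ν.map (fun t => 2 * min (ν (Iic t)).toReal (ν (Ici t)).toReal) =
      volume.restrict (Icc 0 1) := by
  have hpValue :
      (fun t => 2 * min (ν (Iic t)).toReal (ν (Ici t)).toReal) = tentMap ∘ cdf ν := by
    ext t
    simp only [← measureReal_def, measureReal_Ici_eq_one_sub_cdf, ← cdf_eq_real, tentMap,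
      Function.comp]
  rw [hpValue, ← Measure.map_map measurable_tentMap (continuous_cdf ν).measurable,
    map_cdf_eq_volume_restrict_Icc, map_tentMap_volume_restrict_Icc]

end ProbabilityTheory

/-- **Proposition 1 (two-sided).** If `μ` is a probability measure on `Ω` and `κ` a Markov
kernel from `Ω` to `ℝ` such that `κ ω` has no atoms for `μ`-almost every `ω`, then the
two-sided prior-predictive replication p-value
`p₂ (ω, t) = 2 * min (κ ω (-∞, t]) (κ ω [t, ∞))`, viewed as a map on `Ω × ℝ` equipped with
the composition measure `μ ⊗ₘ κ`, is uniformly distributed on `[0, 1]`. -/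
theorem prior_prp_two_sided_uniform {Ω : Type*} [MeasurableSpace Ω]
    (μ : Measure Ω) [IsProbabilityMeasure μ]
    (κ : Kernel Ω ℝ) [IsMarkovKernel κ]
    (hNoAtoms : ∀ᵐ ω ∂μ, ∀ t : ℝ, κ ω {t} = 0) :
    (μ ⊗ₘ κ).map
        (fun p : Ω × ℝ =>
          2 * min ((κ p.1) (Set.Iic p.2)).toReal ((κ p.1) (Set.Ici p.2)).toReal)
      = volume.restrict (Set.Icc (0 : ℝ) 1) := by
  have hIic := κ.measurable_apply_prodMk_preimage (measurableSet_le measurable_snd measurable_fst)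
  have hIci := κ.measurable_apply_prodMk_preimage (measurableSet_le measurable_fst measurable_snd)
  refine Measure.map_compProd_eq_of_ae_map_eq
    (measurable_const.mul (hIic.ennreal_toReal.min hIci.ennreal_toReal)) ?_
  filter_upwards [hNoAtoms] with ω hω
  have : NullSingletonClass (κ ω) := ⟨hω⟩
  exact map_twoSided_pValue_eq_volume_restrict_Icc (κ ω)
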